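/- arXiv:0902.3989 — 3 statements merged into one kernel-verified Lean document; each statement's English description precedes it below -/
import Mathlib

section
/- For a bounded operator A on a complex Hilbert space H, the following are equivalent: (1) for all vectors ξ₀, ξ₁ ∈ H, ∑_{i,j=0}^{1} ⟨A^i ξ_j, A^j ξ_i⟩ ≥ 0; (2) A*A ≥ AA* (A is hyponormal). -/
/-!
Completing the square in `ξ 0` gives
`∑ i, ∑ j, ⟪Aⁱ ξⱼ, Aʲ ξᵢ⟫ = ‖ξ₀ + A* ξ₁‖² + ⟪(A*A - AA*) ξ₁, ξ₁⟫`.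
The first summand is nonnegative and vanishes for `ξ₀ = -A* ξ₁`, so the sums are all nonnegative
exactly when `⟪(A*A - AA*) x, x⟫ ≥ 0` for every `x`; since `A*A - AA*` is self-adjoint, this is
its positivity.
-/

open scoped ComplexOrder

namespace ContinuousLinearMap

variable {𝕜 E : Type*} [RCLike 𝕜] [NormedAddCommGroup E] [InnerProductSpace 𝕜 E]
  [CompleteSpace E]

theorem isSelfAdjoint_adjoint_comp_sub_comp_adjoint (A : E →L[𝕜] E) :
    IsSelfAdjoint (adjoint A ∘L A - A ∘L adjoint A) :=
  (IsSelfAdjoint.star_mul_self A).sub (IsSelfAdjoint.mul_star_self A)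

theorem sum_fin_two_inner_pow_eq (A : E →L[𝕜] E) (ξ : Fin 2 → E) :
    ∑ i : Fin 2, ∑ j : Fin 2, (inner 𝕜 ((A ^ (i : ℕ)) (ξ j)) ((A ^ (j : ℕ)) (ξ i)) : 𝕜) =
      inner 𝕜 (ξ 0 + adjoint A (ξ 1)) (ξ 0 + adjoint A (ξ 1)) +
        inner 𝕜 ((adjoint A ∘L A - A ∘L adjoint A) (ξ 1)) (ξ 1) := by
  simp only [Fin.sum_univ_two, Fin.val_zero, Fin.val_one, pow_zero, pow_one, one_apply_eq_self,
    map_add, inner_add_left, inner_add_right, sub_apply, comp_apply, inner_sub_left,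
    adjoint_inner_left, adjoint_inner_right]
  ring

end ContinuousLinearMap

/-- For a bounded operator `A` on a complex Hilbert space, the `n = 1` Halmos–Bram
inequalities are equivalent to hyponormality `A*A ≥ AA*`. -/
theorem halmosBram_one_iff_hyponormal {H : Type*} [NormedAddCommGroup H]
    [InnerProductSpace ℂ H] [CompleteSpace H] (A : H →L[ℂ] H) :
    (∀ ξ : Fin 2 → H,
        0 ≤ ∑ i : Fin 2, ∑ j : Fin 2,
          (inner ℂ ((A ^ (i : ℕ)) (ξ j)) ((A ^ (j : ℕ)) (ξ i)) : ℂ)) ↔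
      (ContinuousLinearMap.adjoint A ∘L A - A ∘L ContinuousLinearMap.adjoint A).IsPositive := by
  simp only [ContinuousLinearMap.sum_fin_two_inner_pow_eq]
  constructor
  · intro h
    refine (ContinuousLinearMap.isPositive_iff' _).mpr
      ⟨A.isSelfAdjoint_adjoint_comp_sub_comp_adjoint, fun x => ?_⟩
    simpa using h ![-A.adjoint x, x]
  · intro hA ξ
    have hsq : (0 : ℂ) ≤ inner ℂ (ξ 0 + A.adjoint (ξ 1)) (ξ 0 + A.adjoint (ξ 1)) := by
      rw [inner_self_eq_norm_sq_to_K]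
      positivity
    exact add_nonneg hsq (hA.inner_nonneg_left _)
end

section
/- Let A ∈ B(H) with ‖A‖ ≤ 1 and set A(n) = Aⁿ for n ≥ 0, A(n) = (A*)^{|n|} for n < 0. Then for every ξ ∈ H the sequence a_n = ⟨A(n)ξ, ξ⟩, n ∈ ℤ, is of positive type: for every finitely supported sequence (λ_n) of complex numbers, ∑_{m,n ∈ ℤ} a_{n−m} λ_n conj(λ_m) ≥ 0. -/
open scoped ComplexOrder

/-!
Feed vectors `gⱼ`, `j ∈ s`, in increasing order of `j` into the recursion `xₖ₊₁ = A xₖ + gₖ`.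
Appending a new largest index `a` to `s` raises the Toeplitz form `∑ ⟪A(n - m) gₘ, gₙ⟫` by exactly
`‖gₐ + x‖² - ‖x‖²`, where `x` is the state at time `a`, while between inputs the contraction `A`
can only shrink the state. By induction the form dominates the squared norm of the final state,
so it is nonnegative; for `gₙ = λₙ ξ` it is the sum in the theorem.
-/

namespace ContractionToeplitz

open ContinuousLinearMap Finset

variable {H : Type*} [NormedAddCommGroup H] [InnerProductSpace ℂ H] [CompleteSpace H]
  (A : H →L[ℂ] H)

/-- The operator `A(n)` of the statement. -/
noncomputable def toeplitzPow (n : ℤ) : H →L[ℂ] H :=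
  if 0 ≤ n then A ^ n.toNat else adjoint A ^ (-n).toNat

theorem toeplitzPow_natCast (n : ℕ) : toeplitzPow A n = A ^ n := by
  simp [toeplitzPow]

theorem toeplitzPow_neg_natCast (n : ℕ) : toeplitzPow A (-n) = adjoint A ^ n := by
  rcases n with _ | n
  · simp [toeplitzPow]
  · rw [toeplitzPow, if_neg (by omega), neg_neg, Int.toNat_natCast]

theorem toeplitzPow_sub_of_le {m n : ℤ} (h : m ≤ n) :
    toeplitzPow A (n - m) = A ^ (n - m).toNat := by
  rw [← toeplitzPow_natCast, Int.toNat_of_nonneg (by omega)]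

theorem toeplitzPow_sub_of_ge {m n : ℤ} (h : m ≤ n) :
    toeplitzPow A (m - n) = adjoint (A ^ (n - m).toNat) := by
  rw [← star_eq_adjoint, star_pow, star_eq_adjoint, ← toeplitzPow_neg_natCast,
    Int.toNat_of_nonneg (by omega), neg_sub]

noncomputable def toeplitzForm (s : Finset ℤ) (g : ℤ → H) : ℂ :=
  ∑ n ∈ s, ∑ m ∈ s, inner ℂ (toeplitzPow A (n - m) (g m)) (g n)

/-- The state at time `t` of the recursion `xₖ₊₁ = A xₖ + gₖ` driven by the inputs `gⱼ`, `j ∈ s`. -/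
noncomputable def stateAt (g : ℤ → H) (s : Finset ℤ) (t : ℤ) : H :=
  ∑ j ∈ s, (A ^ (t - j).toNat) (g j)

theorem toeplitzForm_insert {s : Finset ℤ} {a : ℤ} (hs : ∀ j ∈ s, j < a) (g : ℤ → H) :
    toeplitzForm A (insert a s) g = toeplitzForm A s g + inner ℂ (g a) (g a)
      + inner ℂ (g a) (stateAt A g s a) + inner ℂ (stateAt A g s a) (g a) := by
  have ha : a ∉ s := fun h => lt_irrefl a (hs a h)
  have hrow : ∑ m ∈ s, inner ℂ (toeplitzPow A (a - m) (g m)) (g a)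
      = inner ℂ (stateAt A g s a) (g a) := by
    rw [stateAt, sum_inner]
    refine sum_congr rfl fun j hj => ?_
    rw [toeplitzPow_sub_of_le A (hs j hj).le]
  have hcol : ∑ n ∈ s, inner ℂ (toeplitzPow A (n - a) (g a)) (g n)
      = inner ℂ (g a) (stateAt A g s a) := by
    rw [stateAt, inner_sum]
    refine sum_congr rfl fun j hj => ?_
    rw [toeplitzPow_sub_of_ge A (hs j hj).le, adjoint_inner_left]
  have hdiag : toeplitzPow A (a - a) = 1 := by simpa using toeplitzPow_natCast A 0
  simp only [toeplitzForm, sum_insert ha, sum_add_distrib, hrow, hcol, hdiag, one_apply_eq_self]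
  ring

omit [CompleteSpace H] in
theorem stateAt_insert {s : Finset ℤ} {a t : ℤ} (hs : ∀ j ∈ s, j < a) (hat : a ≤ t)
    (g : ℤ → H) :
    stateAt A g (insert a s) t = (A ^ (t - a).toNat) (g a + stateAt A g s a) := by
  have ha : a ∉ s := fun h => lt_irrefl a (hs a h)
  rw [stateAt, sum_insert ha, stateAt, map_add, map_sum]
  congr 1
  refine sum_congr rfl fun j hj => ?_
  rw [← mul_apply_eq_comp, ← pow_add]
  congr 3
  have := hs j hj
  omega

omit [CompleteSpace H] in
theorem norm_pow_apply_le {A : H →L[ℂ] H} (hA : ‖A‖ ≤ 1) (k : ℕ) (x : H) :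
    ‖(A ^ k) x‖ ≤ ‖x‖ := by
  induction k with
  | zero => simp
  | succ k ih =>
    rw [pow_succ', mul_apply_eq_comp]
    exact (A.le_of_opNorm_le hA _).trans (by simpa using ih)

theorem norm_stateAt_sq_le_toeplitzForm {A : H →L[ℂ] H} (hA : ‖A‖ ≤ 1) (g : ℤ → H)
    (s : Finset ℤ) : ∀ t, (∀ j ∈ s, j ≤ t) →
      ((‖stateAt A g s t‖ ^ 2 : ℝ) : ℂ) ≤ toeplitzForm A s g := by
  induction s using Finset.induction_on_max with
  | empty => simp [stateAt, toeplitzForm]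
  | insert a s hs ih =>
    intro t ht
    have hat : a ≤ t := ht a (mem_insert_self a s)
    have hstate := ih a fun j hj => (hs j hj).le
    have hdecay : ‖stateAt A g (insert a s) t‖ ^ 2 ≤ ‖g a + stateAt A g s a‖ ^ 2 := by
      rw [stateAt_insert A hs hat]
      gcongr
      exact norm_pow_apply_le hA _ _
    calc ((‖stateAt A g (insert a s) t‖ ^ 2 : ℝ) : ℂ)
        ≤ ((‖g a + stateAt A g s a‖ ^ 2 : ℝ) : ℂ) := by exact_mod_cast hdecay
      _ = inner ℂ (g a + stateAt A g s a) (g a + stateAt A g s a) := by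
        simp [inner_self_eq_norm_sq_to_K]
      _ = inner ℂ (g a) (g a) + inner ℂ (g a) (stateAt A g s a)
          + inner ℂ (stateAt A g s a) (g a) + ((‖stateAt A g s a‖ ^ 2 : ℝ) : ℂ) := by
        rw [inner_add_add_self]
        simp [inner_self_eq_norm_sq_to_K]
      _ ≤ inner ℂ (g a) (g a) + inner ℂ (g a) (stateAt A g s a)
          + inner ℂ (stateAt A g s a) (g a) + toeplitzForm A s g := by gcongr
      _ = toeplitzForm A (insert a s) g := by rw [toeplitzForm_insert A hs]; ring

theorem toeplitzForm_nonneg {A : H →L[ℂ] H} (hA : ‖A‖ ≤ 1) (s : Finset ℤ) (g : ℤ → H) :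
    0 ≤ toeplitzForm A s g := by
  obtain ⟨t, ht⟩ := s.bddAbove
  refine le_trans ?_ (norm_stateAt_sq_le_toeplitzForm hA g s t fun j hj => ht hj)
  exact_mod_cast sq_nonneg ‖stateAt A g s t‖

end ContractionToeplitz

open ContractionToeplitz Finset in
/-- For a contraction `A`, with `A(n) = Aⁿ` for `n ≥ 0` and `A(n) = (A*)^{|n|}` for
`n < 0`, the sequence `a_n = ⟨A(n)ξ, ξ⟩` is of positive type on `ℤ`. -/
theorem contraction_moment_sequence_positive_type {H : Type*}
    [NormedAddCommGroup H] [InnerProductSpace ℂ H] [CompleteSpace H]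
    (A : H →L[ℂ] H) (hA : ‖A‖ ≤ 1)
    (Az : ℤ → H →L[ℂ] H)
    (hpos : ∀ n : ℕ, Az (n : ℤ) = A ^ n)
    (hneg : ∀ n : ℕ, Az (-(n : ℤ)) = (ContinuousLinearMap.adjoint A) ^ n)
    (ξ : H) (lam : ℤ →₀ ℂ) :
    0 ≤ ∑ n ∈ lam.support, ∑ m ∈ lam.support,
      (inner ℂ (Az (n - m) ξ) ξ : ℂ) * lam n * (starRingEnd ℂ) (lam m) := by
  have hAz : Az = toeplitzPow A := funext fun k => by
    obtain ⟨n, rfl | rfl⟩ := Int.eq_nat_or_neg k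
    · rw [hpos, toeplitzPow_natCast]
    · rw [hneg, toeplitzPow_neg_natCast]
  have hform : toeplitzForm A lam.support (fun n => lam n • ξ) = ∑ n ∈ lam.support,
      ∑ m ∈ lam.support, (inner ℂ (Az (n - m) ξ) ξ : ℂ) * lam n * (starRingEnd ℂ) (lam m) := by
    simp only [toeplitzForm, hAz, map_smul, inner_smul_left, inner_smul_right]
    exact sum_congr rfl fun n _ => sum_congr rfl fun m _ => by ring
  exact hform ▸ toeplitzForm_nonneg hA _ _
end

section
/- Let H be a Hilbert space and T an operator on H. Then for any unitary U on a Hilbert space K ⊇ H with Tⁿ = P_H Uⁿ|_H for all n ≥ 0, and any n×n matrix F = (f_{ij}) of complex polynomials, ‖(f_{ij}(T))‖_{B(Hⁿ)} ≤ sup_{|z|=1} ‖F(z)‖_{Mₙ(ℂ)}. -/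
open scoped ComplexOrder

noncomputable section

variable {K : Type*} [NormedAddCommGroup K] [InnerProductSpace ℂ K] [CompleteSpace K]
variable {n : ℕ}

instance PiLp.instCompleteSpace' {ι : Type*} [Fintype ι] (p : ENNReal) [Fact (1 ≤ p)]
    (β : ι → Type*) [∀ i, NormedAddCommGroup (β i)] [∀ i, CompleteSpace (β i)] :
    CompleteSpace (PiLp p β) := by
  have e : PiLp p β ≃ᵤ (∀ i, β i) :=
    { toEquiv := WithLp.equiv p _
      uniformContinuous_toFun := PiLp.uniformContinuous_ofLp p β
      uniformContinuous_invFun := PiLp.uniformContinuous_toLp p β }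
  exact e.completeSpace_iff.mpr (by infer_instance)

/-- The block operator on `Hⁿ` determined by a matrix of operators. -/
def blockOp (A : Matrix (Fin n) (Fin n) (K →L[ℂ] K)) :
    PiLp 2 (fun _ : Fin n => K) →L[ℂ] PiLp 2 (fun _ : Fin n => K) :=
  (PiLp.continuousLinearEquiv 2 ℂ (fun _ : Fin n => K)).symm.toContinuousLinearMap ∘L
    (ContinuousLinearMap.pi fun i => ∑ j, (A i j) ∘L ContinuousLinearMap.proj j) ∘L
    (PiLp.continuousLinearEquiv 2 ℂ (fun _ : Fin n => K)).toContinuousLinearMap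

@[simp] lemma blockOp_apply (A : Matrix (Fin n) (Fin n) (K →L[ℂ] K))
    (x : PiLp 2 (fun _ : Fin n => K)) (i : Fin n) :
    blockOp A x i = ∑ j, A i j (x j) := by
  simp [blockOp, ContinuousLinearMap.sum_apply]

set_option linter.unusedSectionVars false
set_option synthInstance.maxHeartbeats 1000000
set_option maxHeartbeats 1600000

lemma blockOp_one : blockOp (1 : Matrix (Fin n) (Fin n) (K →L[ℂ] K)) = 1 := by
  ext x i
  have h : ∀ j : Fin n, ((1 : Matrix (Fin n) (Fin n) (K →L[ℂ] K)) i j) (x j)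
      = if j = i then x j else 0 := by
    intro j
    rcases eq_or_ne i j with rfl | hij
    · simp [Matrix.one_apply]
    · simp [Matrix.one_apply, hij, Ne.symm hij]
  simp [h]

lemma blockOp_mul (A B : Matrix (Fin n) (Fin n) (K →L[ℂ] K)) :
    blockOp (A * B) = blockOp A * blockOp B := by
  ext x i
  simp only [blockOp_apply, ContinuousLinearMap.mul_apply, Matrix.mul_apply,
    ContinuousLinearMap.sum_apply, ContinuousLinearMap.mul_apply, map_sum]
  rw [Finset.sum_comm]

/-- The block operator construction as a star algebra homomorphism. -/
def blockHom : Matrix (Fin n) (Fin n) (K →L[ℂ] K) →⋆ₐ[ℂ]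
    (PiLp 2 (fun _ : Fin n => K) →L[ℂ] PiLp 2 (fun _ : Fin n => K)) where
  toFun := blockOp
  map_one' := blockOp_one
  map_mul' := blockOp_mul
  map_zero' := by ext x i; simp
  map_add' A B := by ext x i; simp [Finset.sum_add_distrib]
  commutes' c := by
    ext x i
    have h : ∀ j : Fin n, ((algebraMap ℂ (Matrix (Fin n) (Fin n) (K →L[ℂ] K)) c) i j) (x j)
        = if j = i then c • x j else 0 := by
      intro j
      rcases eq_or_ne i j with rfl | hij
      · simp [Matrix.algebraMap_matrix_apply, Algebra.algebraMap_eq_smul_one]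
      · simp [Matrix.algebraMap_matrix_apply, hij, Ne.symm hij]
    show (blockOp ((algebraMap ℂ (Matrix (Fin n) (Fin n) (K →L[ℂ] K))) c)) x i = _
    rw [blockOp_apply, Finset.sum_congr rfl fun j _ => h j,
      Finset.sum_ite_eq' Finset.univ i]
    simp [Algebra.algebraMap_eq_smul_one]
  map_star' A := by
    show blockOp (star A) = star (blockOp A)
    have h : blockOp (star A) = ContinuousLinearMap.adjoint (blockOp A) := by
      rw [ContinuousLinearMap.eq_adjoint_iff]
      intro x y
      simp only [blockOp_apply, PiLp.inner_apply, Matrix.star_apply,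
        ContinuousLinearMap.star_eq_adjoint, sum_inner, inner_sum]
      have h2 : ∀ k i : Fin n,
          (inner ℂ ((ContinuousLinearMap.adjoint (A i k)) (x i)) (y k) : ℂ)
            = inner ℂ (x i) ((A i k) (y k)) := fun k i =>
        ContinuousLinearMap.adjoint_inner_left _ _ _
      rw [Finset.sum_congr rfl fun k _ => Finset.sum_congr rfl fun i _ => h2 k i,
        Finset.sum_comm]
    rw [h, ContinuousLinearMap.star_eq_adjoint]

/-- A star algebra homomorphism version of `AlgHom.mapMatrix`. -/
def starMapMatrix {A B : Type*} [Semiring A] [Semiring B] [Algebra ℂ A] [Algebra ℂ B]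
    [StarRing A] [StarRing B] (f : A →⋆ₐ[ℂ] B) :
    Matrix (Fin n) (Fin n) A →⋆ₐ[ℂ] Matrix (Fin n) (Fin n) B :=
  { f.toAlgHom.mapMatrix with
    map_star' := fun M => by
      ext i j
      simp [Matrix.star_apply, map_star] }

@[simp] lemma starMapMatrix_apply {A B : Type*} [Semiring A] [Semiring B] [Algebra ℂ A]
    [Algebra ℂ B] [StarRing A] [StarRing B] (f : A →⋆ₐ[ℂ] B)
    (M : Matrix (Fin n) (Fin n) A) (i j : Fin n) :
    starMapMatrix f M i j = f (M i j) := rfl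

/-- The entrywise star algebra homomorphism `C(X, Mₙ(ℂ)) → Mₙ(C(X, ℂ))`. -/
def entryHom (X : Type*) [TopologicalSpace X] :
    C(X, Matrix (Fin n) (Fin n) ℂ) →⋆ₐ[ℂ] Matrix (Fin n) (Fin n) C(X, ℂ) where
  toFun G := Matrix.of fun i j => ⟨fun z => G z i j, (Continuous.matrix_elem G.continuous i j : _)⟩
  map_one' := by
    ext i j z
    rcases eq_or_ne i j with rfl | hij
    · simp [Matrix.one_apply]
    · simp [Matrix.one_apply, hij]
  map_mul' G H := by
    ext i j z
    simp [Matrix.mul_apply]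
  map_zero' := by ext i j z; simp
  map_add' G H := by ext i j z; simp
  commutes' c := by
    ext i j z
    rcases eq_or_ne i j with rfl | hij
    · simp [Matrix.algebraMap_matrix_apply]
    · simp [Matrix.algebraMap_matrix_apply, hij]
  map_star' G := by
    ext i j z
    simp [Matrix.star_apply]

open scoped Matrix.Norms.L2Operator

noncomputable instance matrixCStarAlgebra : CStarAlgebra (Matrix (Fin n) (Fin n) ℂ) where
  toCompleteSpace := FiniteDimensional.complete ℂ _

lemma cfcHom_poly (U : K →L[ℂ] K) (hN : IsStarNormal U) (p : Polynomial ℂ) :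
    cfcHom hN (R := ℂ) (Polynomial.toContinuousMapOnAlgHom (spectrum ℂ U) p)
      = Polynomial.aeval U p := by
  have h : ((cfcHom hN (R := ℂ)).toAlgHom.comp
      (Polynomial.toContinuousMapOnAlgHom (spectrum ℂ U))) = Polynomial.aeval U := by
    apply Polynomial.algHom_ext
    simp only [AlgHom.coe_comp, Function.comp_apply, Polynomial.aeval_X]
    show cfcHom hN (R := ℂ) (Polynomial.toContinuousMapOn Polynomial.X (spectrum ℂ U)) = U
    rw [Polynomial.toContinuousMapOn_X_eq_restrict_id, cfcHom_id hN]
  exact DFunLike.congr_fun h p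

open Polynomial in
lemma unitary_matrix_vonNeumann (U : K →L[ℂ] K) (hU : U ∈ unitary (K →L[ℂ] K))
    (F : Fin n → Fin n → Polynomial ℂ) (x : Fin n → K) :
    ∑ i, ‖∑ j, (Polynomial.aeval U (F i j)) (x j)‖ ^ 2 ≤
      (sSup ((fun z : ℂ => ‖(Matrix.toEuclideanCLM (𝕜 := ℂ)
          (Matrix.of fun i j => Polynomial.eval z (F i j)))‖) ''
        Metric.sphere (0 : ℂ) 1)) ^ 2 * ∑ j, ‖x j‖ ^ 2 := by
  have hN : IsStarNormal U := isStarNormal_of_mem_unitary hU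
  have hfun : (fun z : ℂ => ‖(Matrix.toEuclideanCLM (𝕜 := ℂ)
        (Matrix.of fun i j => Polynomial.eval z (F i j)))‖)
      = fun z : ℂ => ‖(Matrix.of fun i j => Polynomial.eval z (F i j)
          : Matrix (Fin n) (Fin n) ℂ)‖ :=
    funext fun z => (Matrix.cstar_norm_def _).symm
  rw [hfun]
  set M := sSup ((fun z : ℂ => ‖(Matrix.of fun i j => Polynomial.eval z (F i j)
      : Matrix (Fin n) (Fin n) ℂ)‖) '' Metric.sphere (0 : ℂ) 1) with hM
  have hM0 : 0 ≤ M := Real.sSup_nonneg (by rintro - ⟨z, -, rfl⟩; positivity)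
  -- continuity of the matrix-valued polynomial function
  have hcont : Continuous fun z : ℂ => (Matrix.of fun i j => Polynomial.eval z (F i j)
      : Matrix (Fin n) (Fin n) ℂ) := by
    have h1 : (fun z : ℂ => (Matrix.of fun i j => Polynomial.eval z (F i j)
        : Matrix (Fin n) (Fin n) ℂ))
        = fun z => ∑ i : Fin n, ∑ j : Fin n,
            (Polynomial.eval z (F i j)) • Matrix.single i j (1 : ℂ) := by
      funext z
      rw [Matrix.matrix_eq_sum_single (Matrix.of fun i j => Polynomial.eval z (F i j))]
      refine Finset.sum_congr rfl fun i _ => Finset.sum_congr rfl fun j _ => ?_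
      rw [Matrix.smul_single, smul_eq_mul, mul_one]
      rfl
    rw [h1]
    refine continuous_finset_sum _ fun i _ => continuous_finset_sum _ fun j _ =>
      ((F i j).continuous).smul continuous_const
  have hbdd : BddAbove ((fun z : ℂ => ‖(Matrix.of fun i j => Polynomial.eval z (F i j)
      : Matrix (Fin n) (Fin n) ℂ)‖) '' Metric.sphere (0 : ℂ) 1) :=
    ((isCompact_sphere (0 : ℂ) 1).image hcont.norm).bddAbove
  have hsp : ∀ z ∈ spectrum ℂ U, ‖(Matrix.of fun i j => Polynomial.eval z (F i j)
      : Matrix (Fin n) (Fin n) ℂ)‖ ≤ M := fun z hz =>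
    le_csSup hbdd ⟨z, spectrum.subset_circle_of_unitary hU hz, rfl⟩
  -- the continuous matrix-valued function on the spectrum
  set G : C(spectrum ℂ U, Matrix (Fin n) (Fin n) ℂ) :=
    ⟨fun z => Matrix.of fun i j => Polynomial.eval (z : ℂ) (F i j),
      hcont.comp continuous_subtype_val⟩ with hGdef
  have hG : ‖G‖ ≤ M := (ContinuousMap.norm_le G hM0).mpr fun z => hsp z z.2
  -- the star algebra homomorphism
  set Ψ : C(spectrum ℂ U, Matrix (Fin n) (Fin n) ℂ) →⋆ₐ[ℂ]
      (PiLp 2 (fun _ : Fin n => K) →L[ℂ] PiLp 2 (fun _ : Fin n => K)) :=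
    blockHom.comp ((starMapMatrix (cfcHom hN (R := ℂ))).comp (entryHom (spectrum ℂ U)))
    with hΨdef
  have hΨ : ‖Ψ G‖ ≤ M := le_trans (NonUnitalStarAlgHom.norm_apply_le Ψ G) hG
  set x' : PiLp 2 (fun _ : Fin n => K) := (WithLp.equiv 2 (∀ _ : Fin n, K)).symm x with hx'
  have key : ∀ i, (Ψ G) x' i = ∑ j, (Polynomial.aeval U (F i j)) (x j) := by
    intro i
    show blockOp _ x' i = _
    rw [blockOp_apply]
    refine Finset.sum_congr rfl fun j _ => ?_
    have hentry : (entryHom (spectrum ℂ U) G i j : C(spectrum ℂ U, ℂ))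
        = Polynomial.toContinuousMapOnAlgHom (spectrum ℂ U) (F i j) := by
      ext z; rfl
    show (cfcHom hN (R := ℂ) (entryHom (spectrum ℂ U) G i j)) (x' j) = _
    rw [hentry, cfcHom_poly U hN (F i j)]
    rfl
  have h1 : ∑ i, ‖∑ j, (Polynomial.aeval U (F i j)) (x j)‖ ^ 2 = ‖(Ψ G) x'‖ ^ 2 := by
    rw [PiLp.norm_sq_eq_of_L2]
    exact (Finset.sum_congr rfl fun i _ => by rw [key i]).symm
  have h2 : ‖(Ψ G) x'‖ ≤ M * ‖x'‖ :=
    le_trans ((Ψ G).le_opNorm x') (mul_le_mul_of_nonneg_right hΨ (norm_nonneg _))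
  have h3 : ‖x'‖ ^ 2 = ∑ j, ‖x j‖ ^ 2 := by
    rw [PiLp.norm_sq_eq_of_L2]
    rfl
  calc ∑ i, ‖∑ j, (Polynomial.aeval U (F i j)) (x j)‖ ^ 2
      = ‖(Ψ G) x'‖ ^ 2 := h1
    _ ≤ (M * ‖x'‖) ^ 2 := by
        exact pow_le_pow_left₀ (norm_nonneg _) h2 2
    _ = M ^ 2 * ∑ j, ‖x j‖ ^ 2 := by rw [mul_pow, h3]

lemma aeval_inner_dilation {H : Type*} [NormedAddCommGroup H] [InnerProductSpace ℂ H]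
    [CompleteSpace H] (T : H →L[ℂ] H) (e : H →ₗᵢ[ℂ] K) (U : K →L[ℂ] K)
    (hdil : ∀ (m : ℕ) (ξ η : H),
      (inner ℂ ((T ^ m) ξ) η : ℂ) = inner ℂ ((U ^ m) (e ξ)) (e η))
    (p : Polynomial ℂ) (ξ η : H) :
    (inner ℂ ((Polynomial.aeval T p) ξ) η : ℂ)
      = inner ℂ ((Polynomial.aeval U p) (e ξ)) (e η) := by
  induction p using Polynomial.induction_on' with
  | add p q hp hq => simp [inner_add_left, hp, hq]
  | monomial m c =>
      simp only [Polynomial.aeval_monomial, ContinuousLinearMap.mul_apply,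
        Algebra.algebraMap_eq_smul_one, ContinuousLinearMap.smul_apply,
        ContinuousLinearMap.one_apply, inner_smul_left]
      rw [hdil m ξ η]

lemma norm_sum_aeval_le_dilation {H : Type*} [NormedAddCommGroup H] [InnerProductSpace ℂ H]
    [CompleteSpace H] (T : H →L[ℂ] H) (e : H →ₗᵢ[ℂ] K) (U : K →L[ℂ] K)
    (hdil : ∀ (m : ℕ) (ξ η : H),
      (inner ℂ ((T ^ m) ξ) η : ℂ) = inner ℂ ((U ^ m) (e ξ)) (e η))
    (F : Fin n → Fin n → Polynomial ℂ) (ξ : Fin n → H) (i : Fin n) :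
    ‖∑ j, (Polynomial.aeval T (F i j)) (ξ j)‖
      ≤ ‖∑ j, (Polynomial.aeval U (F i j)) (e (ξ j))‖ := by
  set η : H := ∑ j, (Polynomial.aeval T (F i j)) (ξ j) with hη
  set ζ : K := ∑ j, (Polynomial.aeval U (F i j)) (e (ξ j)) with hζ
  have hinner : (inner ℂ η η : ℂ) = inner ℂ ζ (e η) := by
    rw [hη, hζ]
    rw [sum_inner, sum_inner]
    exact Finset.sum_congr rfl fun j _ =>
      aeval_inner_dilation T e U hdil (F i j) (ξ j) η
  have hsq : ‖η‖ * ‖η‖ ≤ ‖ζ‖ * ‖η‖ := by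
    calc ‖η‖ * ‖η‖ = RCLike.re (inner ℂ η η : ℂ) := (inner_self_eq_norm_mul_norm (𝕜 := ℂ) η).symm
      _ = RCLike.re (inner ℂ ζ (e η) : ℂ) := by rw [hinner]
      _ ≤ ‖(inner ℂ ζ (e η) : ℂ)‖ := RCLike.re_le_norm _
      _ ≤ ‖ζ‖ * ‖e η‖ := norm_inner_le_norm _ _
      _ = ‖ζ‖ * ‖η‖ := by rw [e.norm_map]
  rcases eq_or_lt_of_le (norm_nonneg η) with h0 | h0
  · rw [← h0]; exact norm_nonneg _
  · exact le_of_mul_le_mul_right hsq h0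

end

/-- Matrix-valued (complete) von Neumann inequality: if `U` is a unitary power
dilation of the contraction `T` (via the isometric embedding `e : H → K`), then for
every `n × n` matrix `F = (f_{ij})` of complex polynomials, the operator matrix
`(f_{ij}(T))` on `Hⁿ` has norm at most `sup_{|z| = 1} ‖F(z)‖` (the bound being
expressed through the quadratic form on `Hⁿ`). -/
theorem matrix_vonNeumann_of_unitary_dilation {H K : Type*}
    [NormedAddCommGroup H] [InnerProductSpace ℂ H] [CompleteSpace H]
    [NormedAddCommGroup K] [InnerProductSpace ℂ K] [CompleteSpace K]
    (T : H →L[ℂ] H) (e : H →ₗᵢ[ℂ] K) (U : K →L[ℂ] K)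
    (hU : U ∈ unitary (K →L[ℂ] K))
    (hdil : ∀ (m : ℕ) (ξ η : H),
      (inner ℂ ((T ^ m) ξ) η : ℂ) = inner ℂ ((U ^ m) (e ξ)) (e η))
    (n : ℕ) (F : Fin n → Fin n → Polynomial ℂ) :
    ∀ ξ : Fin n → H,
      ∑ i, ‖∑ j, (Polynomial.aeval T (F i j)) (ξ j)‖ ^ 2 ≤
        (sSup ((fun z : ℂ => ‖(Matrix.toEuclideanCLM (𝕜 := ℂ)
            (Matrix.of fun i j => Polynomial.eval z (F i j)))‖) ''
          Metric.sphere (0 : ℂ) 1)) ^ 2 * ∑ j, ‖ξ j‖ ^ 2 := by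
  intro ξ
  have step1 : ∑ i, ‖∑ j, (Polynomial.aeval T (F i j)) (ξ j)‖ ^ 2
      ≤ ∑ i, ‖∑ j, (Polynomial.aeval U (F i j)) (e (ξ j))‖ ^ 2 :=
    Finset.sum_le_sum fun i _ => pow_le_pow_left₀ (norm_nonneg _)
      (norm_sum_aeval_le_dilation T e U hdil F ξ i) 2
  have step2 := unitary_matrix_vonNeumann U hU F (fun j => e (ξ j))
  have step3 : ∑ j, ‖e (ξ j)‖ ^ 2 = ∑ j, ‖ξ j‖ ^ 2 :=
    Finset.sum_congr rfl fun j _ => by rw [e.norm_map]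
  calc ∑ i, ‖∑ j, (Polynomial.aeval T (F i j)) (ξ j)‖ ^ 2
      ≤ ∑ i, ‖∑ j, (Polynomial.aeval U (F i j)) (e (ξ j))‖ ^ 2 := step1
    _ ≤ _ * ∑ j, ‖e (ξ j)‖ ^ 2 := step2
    _ = _ := by rw [step3]
end
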